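/- There exists ε₀ ∈ (0,1) such that for all ε, σ with 0 < σ < ε ≤ ε₀ and every integer γ ≥ 1, there exists a positive integer m such that: for every point p in the closed bidisk Δ̄_ε with p ∉ Δ_σ, if Fᵐ(p) ∈ B_γ then p ∈ K^h. -/

import Mathlib

open Filter Topology

/-- The Migdal–Kadanoff renormalization map in affine coordinates centered at the
superattracting fixed point `β = [1:0:0]`. -/
noncomputable def Fmk (p : ℂ × ℂ) : ℂ × ℂ :=
  (p.1 ^ 2 * ((p.1 + 2 * p.2) / (1 + p.2 ^ 2)) ^ 2,
   p.2 ^ 2 * ((1 + (p.1 + p.2) ^ 2) / (1 + p.2 ^ 2)) ^ 2)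

/-- The open bidisk `Δ_ε`. -/
def Bidisk (ε : ℝ) : Set (ℂ × ℂ) := {p | ‖p.1‖ < ε ∧ ‖p.2‖ < ε}

/-- The closed bidisk `Δ̄_ε`. -/
def ClosedBidisk (ε : ℝ) : Set (ℂ × ℂ) := {p | ‖p.1‖ ≤ ε ∧ ‖p.2‖ ≤ ε}

/-- The "bullet" region `B_γ = {|x| ≥ |y|^γ}`. -/
def Bullet (γ : ℕ) : Set (ℂ × ℂ) := {p | ‖p.2‖ ^ γ ≤ ‖p.1‖}

/-- The horizontal cone `K^h = {|y| ≤ |x|}`. -/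
def Khor : Set (ℂ × ℂ) := {p | ‖p.2‖ ≤ ‖p.1‖}

/-- The vertical cone `K^v = {|y| ≥ |x|}`. -/
def Kver : Set (ℂ × ℂ) := {p | ‖p.1‖ ≤ ‖p.2‖}


/-!
Near `β` the map acts on `(|x|, |y|)` roughly as `(|x|, |y|) ↦ (10 |x|² |y|², |y|²)`, so on
`{|x| < |y| ≤ 1/10}` (which `F` preserves) `|y|` decays like `(3/25)^(2^m)`. For
`C = 10 (10/9)^γ` the ratio `s = C |x| / |y|^γ` obeys `s' ≤ |y|² s²`, whence
`s_m ≤ ((3/25)^m s_0)^(2^m)`. Outside `Δ_σ` we have `s_0 ≤ C / σ^γ`, so after `m` steps,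
`m` depending only on `σ` and `γ`, `s_m < 1 ≤ C`, i.e. `Fᵐ(p) ∉ B_γ`.
-/

open Function Set

lemma le_pow_two_pow_of_le_sq {s : ℕ → ℝ} {θ : ℝ} (hs : ∀ m, 0 ≤ s m)
    (hrec : ∀ m, s (m + 1) ≤ θ ^ 2 ^ (m + 1) * s m ^ 2) (m : ℕ) :
    s m ≤ (θ ^ m * s 0) ^ 2 ^ m := by
  induction m with
  | zero => simp
  | succ m ih =>
    have hθ : 0 ≤ θ ^ 2 ^ (m + 1) := Even.pow_nonneg (by simp [pow_succ]) θ
    calc s (m + 1) ≤ θ ^ 2 ^ (m + 1) * s m ^ 2 := hrec m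
      _ ≤ θ ^ 2 ^ (m + 1) * ((θ ^ m * s 0) ^ 2 ^ m) ^ 2 := by gcongr; exact hs m
      _ = (θ ^ (m + 1) * s 0) ^ 2 ^ (m + 1) := by ring

lemma norm_one_add_mem_Icc {w : ℂ} {δ : ℝ} (hw : ‖w‖ ≤ δ) :
    1 - δ ≤ ‖1 + w‖ ∧ ‖1 + w‖ ≤ 1 + δ := by
  have lower := norm_sub_le_norm_add (1 : ℂ) w
  have upper := norm_add_le (1 : ℂ) w
  rw [norm_one] at lower upper
  constructor <;> linarith

lemma norm_one_add_sq_mem_Icc {y : ℂ} (hy : ‖y‖ ≤ 1 / 10) :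
    99 / 100 ≤ ‖1 + y ^ 2‖ ∧ ‖1 + y ^ 2‖ ≤ 101 / 100 := by
  have : ‖y ^ 2‖ ≤ 1 / 100 := by rw [norm_pow]; nlinarith [norm_nonneg y]
  have := norm_one_add_mem_Icc this
  constructor <;> linarith

section Estimates

variable {p : ℂ × ℂ} (hxy : ‖p.1‖ ≤ ‖p.2‖) (hy : ‖p.2‖ ≤ 1 / 10)
include hxy hy

lemma norm_fst_Fmk_le : ‖(Fmk p).1‖ ≤ 10 * ‖p.1‖ ^ 2 * ‖p.2‖ ^ 2 := by
  obtain ⟨hD, -⟩ := norm_one_add_sq_mem_Icc hy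
  have hN : ‖p.1 + 2 * p.2‖ ≤ 3 * ‖p.2‖ := by
    have := norm_add_le p.1 (2 * p.2)
    rw [norm_mul, Complex.norm_two] at this
    linarith
  have hratio : (‖p.1 + 2 * p.2‖ / ‖1 + p.2 ^ 2‖) ^ 2 ≤ 10 * ‖p.2‖ ^ 2 := by
    rw [div_pow, div_le_iff₀ (by positivity)]
    calc ‖p.1 + 2 * p.2‖ ^ 2 ≤ (3 * ‖p.2‖) ^ 2 := by gcongr
      _ ≤ 10 * ‖p.2‖ ^ 2 * (99 / 100) ^ 2 := by nlinarith [norm_nonneg p.2]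
      _ ≤ 10 * ‖p.2‖ ^ 2 * ‖1 + p.2 ^ 2‖ ^ 2 := by gcongr
  calc ‖(Fmk p).1‖ = ‖p.1‖ ^ 2 * (‖p.1 + 2 * p.2‖ / ‖1 + p.2 ^ 2‖) ^ 2 := by
        simp [Fmk]
    _ ≤ ‖p.1‖ ^ 2 * (10 * ‖p.2‖ ^ 2) := by gcongr
    _ = 10 * ‖p.1‖ ^ 2 * ‖p.2‖ ^ 2 := by ring

lemma norm_snd_Fmk_mem_Icc :
    9 / 10 * ‖p.2‖ ^ 2 ≤ ‖(Fmk p).2‖ ∧ ‖(Fmk p).2‖ ≤ 6 / 5 * ‖p.2‖ ^ 2 := by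
  obtain ⟨hD₁, hD₂⟩ := norm_one_add_sq_mem_Icc hy
  have hsum : ‖(p.1 + p.2) ^ 2‖ ≤ 1 / 25 := by
    have := norm_add_le p.1 p.2
    rw [norm_pow]; nlinarith [norm_nonneg (p.1 + p.2)]
  obtain ⟨hN₁, hN₂⟩ := norm_one_add_mem_Icc hsum
  have hratio₁ : 9 / 10 ≤ (‖1 + (p.1 + p.2) ^ 2‖ / ‖1 + p.2 ^ 2‖) ^ 2 := by
    rw [div_pow, le_div_iff₀ (by positivity)]; nlinarith
  have hratio₂ : (‖1 + (p.1 + p.2) ^ 2‖ / ‖1 + p.2 ^ 2‖) ^ 2 ≤ 6 / 5 := by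
    rw [div_pow, div_le_iff₀ (by positivity)]; nlinarith
  have hF : ‖(Fmk p).2‖ = ‖p.2‖ ^ 2 * (‖1 + (p.1 + p.2) ^ 2‖ / ‖1 + p.2 ^ 2‖) ^ 2 := by
    simp [Fmk]
  rw [hF]
  constructor
  · rw [mul_comm]; gcongr
  · rw [mul_comm (6 / 5)]; gcongr

end Estimates

lemma mapsTo_Fmk : MapsTo Fmk (ClosedBidisk (1 / 10) \ Khor) (ClosedBidisk (1 / 10) \ Khor) := by
  rintro p ⟨⟨-, hy⟩, hp⟩
  replace hp : ‖p.1‖ < ‖p.2‖ := not_le.mp hp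
  have hfst := norm_fst_Fmk_le hp.le hy
  obtain ⟨hsnd₁, hsnd₂⟩ := norm_snd_Fmk_mem_Icc hp.le hy
  have hy₀ : 0 < ‖p.2‖ := (norm_nonneg _).trans_lt hp
  have hcone : ‖(Fmk p).1‖ < ‖(Fmk p).2‖ := by
    have : 10 * ‖p.1‖ ^ 2 < 9 / 10 := by nlinarith [norm_nonneg p.1]
    calc ‖(Fmk p).1‖ ≤ 10 * ‖p.1‖ ^ 2 * ‖p.2‖ ^ 2 := hfst
      _ < 9 / 10 * ‖p.2‖ ^ 2 := by gcongr
      _ ≤ ‖(Fmk p).2‖ := hsnd₁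
  have hsnd : ‖(Fmk p).2‖ ≤ 1 / 10 := by nlinarith
  exact ⟨⟨hcone.le.trans hsnd, hsnd⟩, not_le.mpr hcone⟩

noncomputable def bulletRatio (γ : ℕ) (p : ℂ × ℂ) : ℝ :=
  10 * (10 / 9) ^ γ * ‖p.1‖ / ‖p.2‖ ^ γ

lemma bulletRatio_nonneg (γ : ℕ) (p : ℂ × ℂ) : 0 ≤ bulletRatio γ p := by
  unfold bulletRatio; positivity

lemma le_bulletRatio_of_mem_Bullet {γ : ℕ} {p : ℂ × ℂ} (hy : 0 < ‖p.2‖) (hp : p ∈ Bullet γ) :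
    10 * (10 / 9) ^ γ ≤ bulletRatio γ p := by
  rw [bulletRatio, le_div_iff₀ (pow_pos hy γ)]
  exact mul_le_mul_of_nonneg_left hp (by positivity)

lemma bulletRatio_le_of_notMem_Bidisk {γ : ℕ} {p : ℂ × ℂ} {σ : ℝ} (hσ : 0 < σ)
    (hx : ‖p.1‖ ≤ 1) (hpK : p ∉ Khor) (hpσ : p ∉ Bidisk σ) :
    bulletRatio γ p ≤ 10 * (10 / 9) ^ γ / σ ^ γ := by
  have hσy : σ ≤ ‖p.2‖ := by
    by_contra! h
    exact hpσ ⟨(not_le.mp hpK).trans h, h⟩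
  calc bulletRatio γ p ≤ 10 * (10 / 9) ^ γ * 1 / σ ^ γ := by
        unfold bulletRatio; gcongr
    _ = 10 * (10 / 9) ^ γ / σ ^ γ := by rw [mul_one]

lemma bulletRatio_Fmk_le {γ : ℕ} {p : ℂ × ℂ} (hxy : ‖p.1‖ < ‖p.2‖) (hy : ‖p.2‖ ≤ 1 / 10) :
    bulletRatio γ (Fmk p) ≤ ‖p.2‖ ^ 2 * bulletRatio γ p ^ 2 := by
  have hy₀ : 0 < ‖p.2‖ := (norm_nonneg _).trans_lt hxy
  have hpow : (9 / 10) ^ γ * (‖p.2‖ ^ 2) ^ γ ≤ ‖(Fmk p).2‖ ^ γ := by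
    rw [← mul_pow]; gcongr; exact (norm_snd_Fmk_mem_Icc hxy.le hy).1
  calc bulletRatio γ (Fmk p)
      ≤ 10 * (10 / 9) ^ γ * (10 * ‖p.1‖ ^ 2 * ‖p.2‖ ^ 2) / ((9 / 10) ^ γ * (‖p.2‖ ^ 2) ^ γ) := by
        unfold bulletRatio; gcongr; exact norm_fst_Fmk_le hxy.le hy
    _ = ‖p.2‖ ^ 2 * bulletRatio γ p ^ 2 := by
        have hinv : (9 / 10 : ℝ) ^ γ * (10 / 9) ^ γ = 1 := by rw [← mul_pow]; norm_num
        unfold bulletRatio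
        field_simp
        linear_combination (-(‖p.1‖ ^ 2 * ‖p.2‖ ^ (γ * 2))) * hinv

section Orbit

variable {p : ℂ × ℂ} (hp : p ∈ ClosedBidisk (1 / 10) \ Khor)
include hp

lemma norm_fst_iterate_lt (m : ℕ) : ‖(Fmk^[m] p).1‖ < ‖(Fmk^[m] p).2‖ :=
  not_le.mp (mapsTo_Fmk.iterate m hp).2

lemma norm_snd_iterate_le (m : ℕ) : ‖(Fmk^[m] p).2‖ ≤ 1 / 10 :=
  (mapsTo_Fmk.iterate m hp).1.2

lemma norm_snd_iterate_le_pow (m : ℕ) : ‖(Fmk^[m] p).2‖ ≤ (3 / 25) ^ 2 ^ m := by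
  have hrec (n : ℕ) :
      6 / 5 * ‖(Fmk^[n + 1] p).2‖ ≤ 1 ^ 2 ^ (n + 1) * (6 / 5 * ‖(Fmk^[n] p).2‖) ^ 2 := by
    rw [iterate_succ_apply', one_pow, one_mul]
    nlinarith [(norm_snd_Fmk_mem_Icc (norm_fst_iterate_lt hp n).le (norm_snd_iterate_le hp n)).2]
  calc ‖(Fmk^[m] p).2‖ ≤ 6 / 5 * ‖(Fmk^[m] p).2‖ := by nlinarith [norm_nonneg (Fmk^[m] p).2]
    _ ≤ (1 ^ m * (6 / 5 * ‖p.2‖)) ^ 2 ^ m :=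
        le_pow_two_pow_of_le_sq (s := fun n => 6 / 5 * ‖(Fmk^[n] p).2‖) (fun n => by positivity)
          hrec m
    _ ≤ (3 / 25) ^ 2 ^ m := by
        have := norm_snd_iterate_le hp 0
        rw [one_pow, one_mul]; gcongr; simp only [iterate_zero, id_eq] at this; linarith

lemma bulletRatio_iterate_le (γ m : ℕ) :
    bulletRatio γ (Fmk^[m] p) ≤ ((3 / 25) ^ m * bulletRatio γ p) ^ 2 ^ m := by
  refine le_pow_two_pow_of_le_sq (s := fun n => bulletRatio γ (Fmk^[n] p))
    (fun n => bulletRatio_nonneg γ _) (fun n => ?_) m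
  have hy : ‖(Fmk^[n] p).2‖ ^ 2 ≤ (3 / 25) ^ 2 ^ (n + 1) := by
    rw [pow_succ 2 n, pow_mul]; gcongr; exact norm_snd_iterate_le_pow hp n
  simp only [iterate_succ_apply']
  calc _ ≤ ‖(Fmk^[n] p).2‖ ^ 2 * bulletRatio γ (Fmk^[n] p) ^ 2 :=
        bulletRatio_Fmk_le (norm_fst_iterate_lt hp n) (norm_snd_iterate_le hp n)
    _ ≤ _ := by gcongr

end Orbit

theorem nested_bullets_upper :
    ∃ ε₀ : ℝ, 0 < ε₀ ∧ ε₀ < 1 ∧ ∀ ε σ : ℝ, 0 < σ → σ < ε → ε ≤ ε₀ →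
      ∀ γ : ℕ, 1 ≤ γ → ∃ m : ℕ, 0 < m ∧
        ∀ p ∈ ClosedBidisk ε, p ∉ Bidisk σ → Fmk^[m] p ∈ Bullet γ → p ∈ Khor := by
  refine ⟨1 / 10, by norm_num, by norm_num, fun ε σ hσ _ hε γ _ => ?_⟩
  set C : ℝ := 10 * (10 / 9) ^ γ
  have hC : 1 ≤ C := by have : (1 : ℝ) ≤ (10 / 9) ^ γ := one_le_pow₀ (by norm_num); linarith
  obtain ⟨n, hn⟩ := exists_pow_lt_of_lt_one (by positivity : 0 < σ ^ γ / C)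
    (by norm_num : (3 / 25 : ℝ) < 1)
  refine ⟨n + 1, n.succ_pos, fun p hp hpσ hbullet => by_contra fun hpK => ?_⟩
  have hpR : p ∈ ClosedBidisk (1 / 10) \ Khor := ⟨⟨hp.1.trans hε, hp.2.trans hε⟩, hpK⟩
  have hstart : (3 / 25) ^ (n + 1) * bulletRatio γ p < 1 :=
    calc (3 / 25) ^ (n + 1) * bulletRatio γ p ≤ (3 / 25) ^ n * (C / σ ^ γ) := by
          exact mul_le_mul (pow_le_pow_of_le_one (by norm_num) (by norm_num) n.le_succ)
            (bulletRatio_le_of_notMem_Bidisk hσ (hpR.1.1.trans (by norm_num)) hpK hpσ)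
            (bulletRatio_nonneg γ p) (by positivity)
      _ < 1 := by rwa [← mul_div_assoc, div_lt_one (by positivity), ← lt_div_iff₀ (by positivity)]
  have hend : C ≤ bulletRatio γ (Fmk^[n + 1] p) :=
    le_bulletRatio_of_mem_Bullet ((norm_nonneg _).trans_lt (norm_fst_iterate_lt hpR _)) hbullet
  have := (hend.trans (bulletRatio_iterate_le hpR γ (n + 1))).trans_lt
    (pow_lt_one₀ (mul_nonneg (by norm_num) (bulletRatio_nonneg γ p)) hstart (by positivity))
  linarith
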